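/- arXiv:1608.08186 — 3 statements merged into one kernel-verified Lean document; each statement's English description precedes it below -/
import Mathlib

section
/- Let β ∈ ℝ be a constant, let γ : ℝ → ℝ be an affine function γ(t) = γ₀ + μt, let δ : ℝ → ℝ be a polynomial of degree at most 2, and let ε : ℝ → ℝ be a polynomial of degree at most 3. Suppose for all t ∈ ℝ: (β² − γ(t))·ε(t) + δ(t)² + μ² − 2β·γ(t)·δ(t) + γ(t)³ = 0. Then μ = 0, i.e. γ is constant. -/
theorem eq_zero_of_relation_of_eq_sq {R : Type*} [CommRing R] [LinearOrder R]
    [IsStrictOrderedRing R] {β γ δ ε μ : R} (hγ : γ = β ^ 2)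
    (h : (β ^ 2 - γ) * ε + δ ^ 2 + μ ^ 2 - 2 * β * γ * δ + γ ^ 3 = 0) :
    μ = 0 := by
  subst hγ
  have hsum : (δ - β ^ 3) ^ 2 + μ ^ 2 = 0 := by linear_combination h
  exact pow_eq_zero_iff two_ne_zero |>.1
    ((add_eq_zero_iff_of_nonneg (sq_nonneg _) (sq_nonneg _)).1 hsum).2

theorem gamma_t_eq_zero_general (β γ₀ μ : ℝ) (δ ε : Polynomial ℝ)
    (h : ∀ t : ℝ,
      (β ^ 2 - (γ₀ + μ * t)) * ε.eval t + (δ.eval t) ^ 2 + μ ^ 2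
        - 2 * β * (γ₀ + μ * t) * δ.eval t + (γ₀ + μ * t) ^ 3 = 0) :
    μ = 0 := by
  by_contra hμ
  have hγ : γ₀ + μ * ((β ^ 2 - γ₀) / μ) = β ^ 2 := by field_simp; ring
  exact hμ (eq_zero_of_relation_of_eq_sq hγ (h _))

theorem gamma_t_eq_zero (β γ₀ μ : ℝ) (δ ε : Polynomial ℝ)
    (hδ : δ.degree ≤ 2) (hε : ε.degree ≤ 3)
    (h : ∀ t : ℝ,
      (β ^ 2 - (γ₀ + μ * t)) * ε.eval t + (δ.eval t) ^ 2 + μ ^ 2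
        - 2 * β * (γ₀ + μ * t) * δ.eval t + (γ₀ + μ * t) ^ 3 = 0) :
    μ = 0 :=
  gamma_t_eq_zero_general β γ₀ μ δ ε h
end

section
/- Let l ∈ ℂ and let z : ℝ × ℝ → ℂ be smooth in (t, η) satisfying z_ttt = l·z_tt and z_ttη = (l − conj l)·z_tη + l·conj(l)·z_η for all (t,η). If at some point z_tη ≠ l·z_η, then l = 0. -/
/-- partial derivative in the first variable `t` -/
noncomputable def pt (f : ℝ → ℝ → ℂ) : ℝ → ℝ → ℂ := fun t η => deriv (fun s => f s η) t

/-- partial derivative in the second variable `η` -/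
noncomputable def pe (f : ℝ → ℝ → ℂ) : ℝ → ℝ → ℂ := fun t η => deriv (fun s => f t s) η

open Function

section aux

variable {E : Type*} [NormedAddCommGroup E] [NormedSpace ℝ E]

lemma slice1_hasDerivAt {F : ℝ × ℝ → E} (hF : Differentiable ℝ F) (t η : ℝ) :
    HasDerivAt (fun s => F (s, η)) (fderiv ℝ F (t, η) (1, 0)) t := by
  have h1 : HasDerivAt (fun s : ℝ => (s, η)) ((1 : ℝ), (0 : ℝ)) t :=
    HasDerivAt.prodMk (hasDerivAt_id t) (hasDerivAt_const t η)
  exact (hF (t, η)).hasFDerivAt.comp_hasDerivAt t h1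

lemma slice2_hasDerivAt {F : ℝ × ℝ → E} (hF : Differentiable ℝ F) (t η : ℝ) :
    HasDerivAt (fun s => F (t, s)) (fderiv ℝ F (t, η) (0, 1)) η := by
  have h1 : HasDerivAt (fun s : ℝ => (t, s)) ((0 : ℝ), (1 : ℝ)) η :=
    HasDerivAt.prodMk (hasDerivAt_const η t) (hasDerivAt_id η)
  exact (hF (t, η)).hasFDerivAt.comp_hasDerivAt η h1

end aux

lemma pt_eq {f : ℝ → ℝ → ℂ} (hf : ContDiff ℝ (⊤ : ℕ∞) (uncurry f)) (t η : ℝ) :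
    pt f t η = fderiv ℝ (uncurry f) (t, η) (1, 0) :=
  (slice1_hasDerivAt (hf.differentiable (by simp)) t η).deriv

lemma pe_eq {f : ℝ → ℝ → ℂ} (hf : ContDiff ℝ (⊤ : ℕ∞) (uncurry f)) (t η : ℝ) :
    pe f t η = fderiv ℝ (uncurry f) (t, η) (0, 1) :=
  (slice2_hasDerivAt (hf.differentiable (by simp)) t η).deriv

lemma contDiff_pt {f : ℝ → ℝ → ℂ} (hf : ContDiff ℝ (⊤ : ℕ∞) (uncurry f)) :
    ContDiff ℝ (⊤ : ℕ∞) (uncurry (pt f)) := by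
  have : uncurry (pt f) = fun p : ℝ × ℝ => fderiv ℝ (uncurry f) p ((1 : ℝ), (0 : ℝ)) := by
    funext p
    exact pt_eq hf p.1 p.2
  rw [this]
  exact (hf.fderiv_right (by simp)).clm_apply contDiff_const

lemma contDiff_pe {f : ℝ → ℝ → ℂ} (hf : ContDiff ℝ (⊤ : ℕ∞) (uncurry f)) :
    ContDiff ℝ (⊤ : ℕ∞) (uncurry (pe f)) := by
  have : uncurry (pe f) = fun p : ℝ × ℝ => fderiv ℝ (uncurry f) p ((0 : ℝ), (1 : ℝ)) := by
    funext p
    exact pe_eq hf p.1 p.2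
  rw [this]
  exact (hf.fderiv_right (by simp)).clm_apply contDiff_const

/-- Clairaut: mixed partials commute for smooth functions. -/
lemma pt_pe_comm {f : ℝ → ℝ → ℂ} (hf : ContDiff ℝ (⊤ : ℕ∞) (uncurry f)) (t η : ℝ) :
    pt (pe f) t η = pe (pt f) t η := by
  set F := uncurry f with hFdef
  set G := fderiv ℝ F with hGdef
  have hG : ContDiff ℝ (⊤ : ℕ∞) G := hf.fderiv_right (by simp)
  -- pt (pe f) t η = fderiv G (t,η) (1,0) (0,1)
  have e1 : pt (pe f) t η = fderiv ℝ G (t, η) (1, 0) (0, 1) := by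
    have hfun : (fun s => pe f s η) = fun s => G (s, η) ((0 : ℝ), (1 : ℝ)) := by
      funext s; exact pe_eq hf s η
    have hd : HasDerivAt (fun s => G (s, η)) (fderiv ℝ G (t, η) (1, 0)) t :=
      slice1_hasDerivAt (hG.differentiable (by simp)) t η
    have hd2 : HasDerivAt (fun s => G (s, η) ((0 : ℝ), (1 : ℝ)))
        (fderiv ℝ G (t, η) (1, 0) (0, 1)) t := by
      simpa using hd.clm_apply (hasDerivAt_const t ((0 : ℝ), (1 : ℝ)))
    simp only [pt, hfun]
    exact hd2.deriv
  have e2 : pe (pt f) t η = fderiv ℝ G (t, η) (0, 1) (1, 0) := by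
    have hfun : (fun s => pt f t s) = fun s => G (t, s) ((1 : ℝ), (0 : ℝ)) := by
      funext s; exact pt_eq hf t s
    have hd : HasDerivAt (fun s => G (t, s)) (fderiv ℝ G (t, η) (0, 1)) η :=
      slice2_hasDerivAt (hG.differentiable (by simp)) t η
    have hd2 : HasDerivAt (fun s => G (t, s) ((1 : ℝ), (0 : ℝ)))
        (fderiv ℝ G (t, η) (0, 1) (1, 0)) η := by
      simpa using hd.clm_apply (hasDerivAt_const η ((1 : ℝ), (0 : ℝ)))
    simp only [pe, hfun]
    exact hd2.deriv
  have hsym : fderiv ℝ G (t, η) (1, 0) (0, 1) = fderiv ℝ G (t, η) (0, 1) (1, 0) := by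
    apply second_derivative_symmetric (f := F) (f' := G)
    · intro y; exact ((hf.differentiable (by simp)) y).hasFDerivAt
    · exact ((hG.differentiable (by simp)) (t, η)).hasFDerivAt
  rw [e1, e2, hsym]

theorem degenerate_case_forces_l_zero (l : ℂ) (z : ℝ → ℝ → ℂ)
    (hz : ContDiff ℝ (⊤ : ℕ∞) (Function.uncurry z))
    (h1 : ∀ t η, pt (pt (pt z)) t η = l * pt (pt z) t η)
    (h2 : ∀ t η, pe (pt (pt z)) t η
        = (l - starRingEnd ℂ l) * pe (pt z) t η + l * starRingEnd ℂ l * pe z t η)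
    (h3 : ∃ t η, pe (pt z) t η ≠ l * pe z t η) :
    l = 0 := by
  obtain ⟨t, η, hne⟩ := h3
  have hz1 : ContDiff ℝ (⊤ : ℕ∞) (uncurry (pt z)) := contDiff_pt hz
  have hz2 : ContDiff ℝ (⊤ : ℕ∞) (uncurry (pt (pt z))) := contDiff_pt hz1
  have hez : ContDiff ℝ (⊤ : ℕ∞) (uncurry (pe z)) := contDiff_pe hz
  have hez1 : ContDiff ℝ (⊤ : ℕ∞) (uncurry (pe (pt z))) := contDiff_pe hz1
  -- differentiate h2 in t at (t, η)
  have key : pt (pe (pt (pt z))) t η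
      = (l - starRingEnd ℂ l) * pt (pe (pt z)) t η
        + l * starRingEnd ℂ l * pt (pe z) t η := by
    have d1 : HasDerivAt (fun s => pe (pt z) s η) (pt (pe (pt z)) t η) t := by
      have := slice1_hasDerivAt (hez1.differentiable (by simp)) t η
      rwa [← pt_eq hez1 t η] at this
    have d2 : HasDerivAt (fun s => pe z s η) (pt (pe z) t η) t := by
      have := slice1_hasDerivAt (hez.differentiable (by simp)) t η
      rwa [← pt_eq hez t η] at this
    have dsum : HasDerivAt (fun s => (l - starRingEnd ℂ l) * pe (pt z) s η
        + l * starRingEnd ℂ l * pe z s η)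
        ((l - starRingEnd ℂ l) * pt (pe (pt z)) t η
          + l * starRingEnd ℂ l * pt (pe z) t η) t :=
      (d1.const_mul _).add (d2.const_mul _)
    have hfun : (fun s => pe (pt (pt z)) s η)
        = fun s => (l - starRingEnd ℂ l) * pe (pt z) s η + l * starRingEnd ℂ l * pe z s η := by
      funext s; exact h2 s η
    have : HasDerivAt (fun s => pe (pt (pt z)) s η)
        ((l - starRingEnd ℂ l) * pt (pe (pt z)) t η
          + l * starRingEnd ℂ l * pt (pe z) t η) t := by
      rw [hfun]; exact dsum
    exact this.deriv
  -- commute mixed partials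
  rw [pt_pe_comm hz2 t η, pt_pe_comm hz1 t η, pt_pe_comm hz t η] at key
  -- left side: pe (pt (pt (pt z))) = l * pe (pt (pt z))
  have hl : pe (pt (pt (pt z))) t η = l * pe (pt (pt z)) t η := by
    have hfun : (fun s => pt (pt (pt z)) t s) = fun s => l * pt (pt z) t s := by
      funext s; exact h1 t s
    simp only [pe, hfun, deriv_const_mul_field]
  rw [hl] at key
  set u := pe (pt z) t η
  set v := pe z t η
  set c := starRingEnd ℂ l with hc
  have hA : pe (pt (pt z)) t η = (l - c) * u + l * c * v := h2 t η
  rw [hA] at key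
  -- key : l * ((l - c) * u + l * c * v) = (l - c) * ((l - c) * u + l * c * v) + l * c * u
  have hzero : c ^ 2 * (l * v - u) = 0 := by linear_combination key
  have hcz : c = 0 := by
    rcases mul_eq_zero.1 hzero with h | h
    · exact pow_eq_zero_iff (n := 2) (by norm_num) |>.1 h
    · exact absurd (show u = l * v by linear_combination -h) hne
  rw [hc] at hcz
  simpa using congrArg (starRingEnd ℂ) hcz
end

section
/- Let K, T : ℝ → ℂ be differentiable functions of η, and let z : ℝ × ℝ → ℂ be smooth in (t, η) satisfying z_tttt = 2i·K(η)·z_ttt + T(η)·z_tt and z_ttη = 2i·K(η)·z_tη + T(η)·z_η for all (t, η). Then 2·K'(η)·z_ttt(t,η) − i·T'(η)·z_tt(t,η) = 0 for all (t, η). -/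
noncomputable def Dv (v : ℝ × ℝ) (F : ℝ × ℝ → ℂ) : ℝ × ℝ → ℂ := fun p => fderiv ℝ F p v

lemma smoothDv (v : ℝ × ℝ) {F : ℝ × ℝ → ℂ} (hF : ContDiff ℝ (⊤ : ℕ∞) F) :
    ContDiff ℝ (⊤ : ℕ∞) (Dv v F) := by
  have h1 : ContDiff ℝ (⊤ : ℕ∞) (fderiv ℝ F) := hF.fderiv_right (by simp)
  exact (ContinuousLinearMap.apply ℝ ℂ v).contDiff.comp h1

lemma hasDt {F : ℝ × ℝ → ℂ} (hF : ContDiff ℝ (⊤ : ℕ∞) F) (t η : ℝ) :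
    HasDerivAt (fun s => F (s, η)) (Dv (1, 0) F (t, η)) t := by
  have hline : HasDerivAt (fun s : ℝ => (s, η)) ((1 : ℝ), (0 : ℝ)) t :=
    (hasDerivAt_id t).prodMk (hasDerivAt_const t η)
  exact ((hF.differentiable (by simp) (t, η)).hasFDerivAt).comp_hasDerivAt t hline

lemma hasDe {F : ℝ × ℝ → ℂ} (hF : ContDiff ℝ (⊤ : ℕ∞) F) (t η : ℝ) :
    HasDerivAt (fun s => F (t, s)) (Dv (0, 1) F (t, η)) η := by
  have hline : HasDerivAt (fun s : ℝ => (t, s)) ((0 : ℝ), (1 : ℝ)) η :=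
    (hasDerivAt_const η t).prodMk (hasDerivAt_id η)
  exact ((hF.differentiable (by simp) (t, η)).hasFDerivAt).comp_hasDerivAt η hline

lemma pt_eq_s7 {F : ℝ × ℝ → ℂ} (hF : ContDiff ℝ (⊤ : ℕ∞) F) :
    pt (fun a b => F (a, b)) = fun t η => Dv (1, 0) F (t, η) := by
  funext t η; exact (hasDt hF t η).deriv

lemma pe_eq_s7 {F : ℝ × ℝ → ℂ} (hF : ContDiff ℝ (⊤ : ℕ∞) F) :
    pe (fun a b => F (a, b)) = fun t η => Dv (0, 1) F (t, η) := by
  funext t η; exact (hasDe hF t η).deriv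

lemma Dv_comm {F : ℝ × ℝ → ℂ} (hF : ContDiff ℝ (⊤ : ℕ∞) F) (v w : ℝ × ℝ) :
    Dv w (Dv v F) = Dv v (Dv w F) := by
  funext p
  have hd : ∀ q, HasFDerivAt F (fderiv ℝ F q) q :=
    fun q => (hF.differentiable (by simp) q).hasFDerivAt
  have h2 : HasFDerivAt (fderiv ℝ F) (fderiv ℝ (fderiv ℝ F) p) p :=
    (((hF.fderiv_right (m := (⊤ : ℕ∞)) (by simp)).differentiable (by simp)) p).hasFDerivAt
  have hsymm := second_derivative_symmetric hd h2 v w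
  have key : ∀ u : ℝ × ℝ, Dv u (Dv v F) p = fderiv ℝ (fderiv ℝ F) p u v := by
    intro u
    have hcomp : HasFDerivAt (Dv v F)
        (((ContinuousLinearMap.apply ℝ ℂ v)).comp (fderiv ℝ (fderiv ℝ F) p)) p :=
      ((ContinuousLinearMap.apply ℝ ℂ v).hasFDerivAt).comp p h2
    simp [Dv, hcomp.fderiv]
  have key' : ∀ u : ℝ × ℝ, Dv u (Dv w F) p = fderiv ℝ (fderiv ℝ F) p u w := by
    intro u
    have hcomp : HasFDerivAt (Dv w F)
        (((ContinuousLinearMap.apply ℝ ℂ w)).comp (fderiv ℝ (fderiv ℝ F) p)) p :=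
      ((ContinuousLinearMap.apply ℝ ℂ w).hasFDerivAt).comp p h2
    simp [Dv, hcomp.fderiv]
  rw [key w, key' v, hsymm]

theorem cross_compat (K T : ℝ → ℂ) (z : ℝ → ℝ → ℂ)
    (hK : Differentiable ℝ K) (hT : Differentiable ℝ T)
    (hz : ContDiff ℝ (⊤ : ℕ∞) (Function.uncurry z))
    (h1 : ∀ t η, pt (pt (pt (pt z))) t η
        = 2 * Complex.I * K η * pt (pt (pt z)) t η + T η * pt (pt z) t η)
    (h2 : ∀ t η, pe (pt (pt z)) t η
        = 2 * Complex.I * K η * pe (pt z) t η + T η * pe z t η) :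
    ∀ t η, 2 * deriv K η * pt (pt (pt z)) t η
        - Complex.I * deriv T η * pt (pt z) t η = 0 := by
  intro t η
  set F : ℝ × ℝ → ℂ := Function.uncurry z with hF
  have hzF : z = fun a b => F (a, b) := rfl
  set dt : ℝ × ℝ := (1, 0)
  set de : ℝ × ℝ := (0, 1)
  have hF0 : ContDiff ℝ (⊤ : ℕ∞) F := hz
  have hF1 : ContDiff ℝ (⊤ : ℕ∞) (Dv dt F) := smoothDv _ hF0
  have hF2 : ContDiff ℝ (⊤ : ℕ∞) (Dv dt (Dv dt F)) := smoothDv _ hF1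
  have hF3 : ContDiff ℝ (⊤ : ℕ∞) (Dv dt (Dv dt (Dv dt F))) := smoothDv _ hF2
  have hE0 : ContDiff ℝ (⊤ : ℕ∞) (Dv de F) := smoothDv _ hF0
  have hE1 : ContDiff ℝ (⊤ : ℕ∞) (Dv de (Dv dt F)) := smoothDv _ hF1
  have hE2 : ContDiff ℝ (⊤ : ℕ∞) (Dv de (Dv dt (Dv dt F))) := smoothDv _ hF2
  have hF4 : ContDiff ℝ (⊤ : ℕ∞) (Dv dt (Dv dt (Dv dt (Dv dt F)))) := smoothDv _ hF3
  have hE3 : ContDiff ℝ (⊤ : ℕ∞) (Dv de (Dv dt (Dv dt (Dv dt F)))) := smoothDv _ hF3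
  -- rewrite partial derivatives
  have e1 : pt z = fun a b => Dv dt F (a, b) := by rw [hzF]; exact pt_eq_s7 hF0
  have e2 : pt (pt z) = fun a b => Dv dt (Dv dt F) (a, b) := by rw [e1]; exact pt_eq_s7 hF1
  have e3 : pt (pt (pt z)) = fun a b => Dv dt (Dv dt (Dv dt F)) (a, b) := by
    rw [e2]; exact pt_eq_s7 hF2
  have e4 : pt (pt (pt (pt z))) = fun a b => Dv dt (Dv dt (Dv dt (Dv dt F))) (a, b) := by
    rw [e3]; exact pt_eq_s7 hF3
  have f0 : pe z = fun a b => Dv de F (a, b) := by rw [hzF]; exact pe_eq_s7 hF0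
  have f1 : pe (pt z) = fun a b => Dv de (Dv dt F) (a, b) := by rw [e1]; exact pe_eq_s7 hF1
  have f2 : pe (pt (pt z)) = fun a b => Dv de (Dv dt (Dv dt F)) (a, b) := by
    rw [e2]; exact pe_eq_s7 hF2
  -- restated hypotheses
  have H1 : ∀ a b, Dv dt (Dv dt (Dv dt (Dv dt F))) (a, b)
      = 2 * Complex.I * K b * Dv dt (Dv dt (Dv dt F)) (a, b)
        + T b * Dv dt (Dv dt F) (a, b) := by
    intro a b; have := h1 a b; rw [e4, e3, e2] at this; exact this
  have H2 : ∀ a b, Dv de (Dv dt (Dv dt F)) (a, b)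
      = 2 * Complex.I * K b * Dv de (Dv dt F) (a, b) + T b * Dv de F (a, b) := by
    intro a b; have := h2 a b; rw [f2, f1, f0] at this; exact this
  -- Step 1: differentiate H2 in t
  have S1 : ∀ a b, Dv dt (Dv de (Dv dt (Dv dt F))) (a, b)
      = 2 * Complex.I * K b * Dv dt (Dv de (Dv dt F)) (a, b)
        + T b * Dv dt (Dv de F) (a, b) := by
    intro a b
    have hL := hasDt hE2 a b
    have hR : HasDerivAt (fun s => 2 * Complex.I * K b * Dv de (Dv dt F) (s, b)
          + T b * Dv de F (s, b))
        (2 * Complex.I * K b * Dv dt (Dv de (Dv dt F)) (a, b)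
          + T b * Dv dt (Dv de F) (a, b)) a :=
      ((hasDt (smoothDv _ hF1) a b).const_mul _).add ((hasDt (smoothDv _ hF0) a b).const_mul _)
    have hfun : (fun s => Dv de (Dv dt (Dv dt F)) (s, b))
        = fun s => 2 * Complex.I * K b * Dv de (Dv dt F) (s, b) + T b * Dv de F (s, b) :=
      funext fun s => H2 s b
    rw [hfun] at hL
    exact hL.unique hR
  -- commute: Dv dt (Dv de G) = Dv de (Dv dt G)
  have c0 : Dv dt (Dv de F) = Dv de (Dv dt F) := Dv_comm hF0 de dt
  have c1 : Dv dt (Dv de (Dv dt F)) = Dv de (Dv dt (Dv dt F)) := Dv_comm hF1 de dt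
  have c2 : Dv dt (Dv de (Dv dt (Dv dt F))) = Dv de (Dv dt (Dv dt (Dv dt F))) :=
    Dv_comm hF2 de dt
  have S1' : ∀ a b, Dv de (Dv dt (Dv dt (Dv dt F))) (a, b)
      = 2 * Complex.I * K b * Dv de (Dv dt (Dv dt F)) (a, b)
        + T b * Dv de (Dv dt F) (a, b) := by
    intro a b; have := S1 a b; rw [c2, c1, c0] at this; exact this
  -- Step 2: differentiate S1' in t
  have S2 : ∀ a b, Dv dt (Dv de (Dv dt (Dv dt (Dv dt F)))) (a, b)
      = 2 * Complex.I * K b * Dv dt (Dv de (Dv dt (Dv dt F))) (a, b)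
        + T b * Dv dt (Dv de (Dv dt F)) (a, b) := by
    intro a b
    have hL := hasDt hE3 a b
    have hR : HasDerivAt (fun s => 2 * Complex.I * K b * Dv de (Dv dt (Dv dt F)) (s, b)
          + T b * Dv de (Dv dt F) (s, b))
        (2 * Complex.I * K b * Dv dt (Dv de (Dv dt (Dv dt F))) (a, b)
          + T b * Dv dt (Dv de (Dv dt F)) (a, b)) a :=
      ((hasDt (smoothDv _ hF2) a b).const_mul _).add ((hasDt (smoothDv _ hF1) a b).const_mul _)
    have hfun : (fun s => Dv de (Dv dt (Dv dt (Dv dt F))) (s, b))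
        = fun s => 2 * Complex.I * K b * Dv de (Dv dt (Dv dt F)) (s, b)
            + T b * Dv de (Dv dt F) (s, b) :=
      funext fun s => S1' s b
    rw [hfun] at hL
    exact hL.unique hR
  have S2' : Dv de (Dv dt (Dv dt (Dv dt (Dv dt F)))) (t, η)
      = 2 * Complex.I * K η * Dv de (Dv dt (Dv dt (Dv dt F))) (t, η)
        + T η * Dv de (Dv dt (Dv dt F)) (t, η) := by
    have := S2 t η
    rwa [c2, c1, Dv_comm hF3 de dt] at this
  -- Step 3: differentiate H1 in η
  have S3 : Dv de (Dv dt (Dv dt (Dv dt (Dv dt F)))) (t, η)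
      = 2 * Complex.I * deriv K η * Dv dt (Dv dt (Dv dt F)) (t, η)
        + 2 * Complex.I * K η * Dv de (Dv dt (Dv dt (Dv dt F))) (t, η)
        + (deriv T η * Dv dt (Dv dt F) (t, η) + T η * Dv de (Dv dt (Dv dt F)) (t, η)) := by
    have hL := hasDe hF4 t η
    have hK' : HasDerivAt (fun s => 2 * Complex.I * K s) (2 * Complex.I * deriv K η) η :=
      (hK η).hasDerivAt.const_mul _
    have hR : HasDerivAt (fun s => 2 * Complex.I * K s * Dv dt (Dv dt (Dv dt F)) (t, s)
          + T s * Dv dt (Dv dt F) (t, s))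
        (2 * Complex.I * deriv K η * Dv dt (Dv dt (Dv dt F)) (t, η)
          + 2 * Complex.I * K η * Dv de (Dv dt (Dv dt (Dv dt F))) (t, η)
          + (deriv T η * Dv dt (Dv dt F) (t, η)
            + T η * Dv de (Dv dt (Dv dt F)) (t, η))) η :=
      (hK'.mul (hasDe hF3 t η)).add ((hT η).hasDerivAt.mul (hasDe hF2 t η))
    have hfun : (fun s => Dv dt (Dv dt (Dv dt (Dv dt F))) (t, s))
        = fun s => 2 * Complex.I * K s * Dv dt (Dv dt (Dv dt F)) (t, s)
            + T s * Dv dt (Dv dt F) (t, s) :=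
      funext fun s => H1 t s
    rw [hfun] at hL
    exact hL.unique hR
  -- combine
  rw [e3, e2]
  have key := S3.symm.trans S2'
  have hI : Complex.I * Complex.I = -1 := Complex.I_mul_I
  linear_combination (-Complex.I) * key + (2 * deriv K η * Dv dt (Dv dt (Dv dt F)) (t, η)) * hI
end
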